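/- Let H be a bialgebra over a commutative ring R and π an n×n matrix with entries in H satisfying Δ(π_{ij}) = Σ_k π_{ik} ⊗ π_{kj} and ε(π_{ij}) = δ_{ij}, invertible as a matrix over H. On the free left H-module H^n define the left coaction Δ_L : H^n → (H ⊗ H)^n componentwise by (Δ_L v)_j = Δ(v_j), and the right coaction Δ_R : H^n → (H ⊗ H)^n by (Δ_R v)_j = Σ_i Δ(b_i) · (π_{ij} ⊗ 1), where b_i = Σ_k v_k (π⁻¹)_{ki} are the coefficients of v in the right-invariant basis ω^R_i = Σ_j π_{ij} e_j. Then the two coactions commute: (id_H ⊗ Δ_R) ∘ Δ_L = (Δ_L ⊗ id_H) ∘ Δ_R as linear maps H^n → (H ⊗ H ⊗ H)^n. -/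

import Mathlib

/-!
In matrix form over `H ⊗ H` the corepresentation property reads `Δπ = (π ⊗ 1)(1 ⊗ π)`, so the
inverse matrix satisfies `Δπ' = (1 ⊗ π')(π' ⊗ 1)`. Consequently
`Σ_i Δ(π'_{ki}) (π_{ij} ⊗ 1) = 1 ⊗ π'_{kj}`, and the right coaction collapses to
`(Δ_R v)_j = Σ_k Δ(v_k) (1 ⊗ π'_{kj})`. Right multiplication by an element of the last leg
commutes with applying `Δ` to the first legs, so bicovariance reduces to coassociativity of `Δ`.
-/

open TensorProduct

/-- The building block of the right coaction on one-forms: the linear map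
`H →ₗ H ⊗ H` sending `x` to `Δ(x · π'_{ki}) · (π_{ij} ⊗ 1)`. -/
noncomputable def Amap (R H : Type*) [CommRing R] [Ring H] [Bialgebra R H] {n : ℕ}
    (π π' : Matrix (Fin n) (Fin n) H) (j i k : Fin n) : H →ₗ[R] H ⊗[R] H :=
  (LinearMap.mulRight R ((π i j) ⊗ₜ[R] (1 : H))) ∘ₗ
    Coalgebra.comul ∘ₗ (LinearMap.mulRight R (π' k i))

/-- The right coaction `Δ_R` on the one-forms `H^n`:
`(Δ_R v)_j = Σ_i Δ(b_i) · (π_{ij} ⊗ 1)` where `b_i = Σ_k v_k (π⁻¹)_{ki}`. -/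
noncomputable def deltaR (R H : Type*) [CommRing R] [Ring H] [Bialgebra R H] {n : ℕ}
    (π π' : Matrix (Fin n) (Fin n) H) (v : Fin n → H) : Fin n → H ⊗[R] H :=
  fun j => ∑ i, ∑ k, Amap R H π π' j i k (v k)

open Algebra.TensorProduct (includeLeft includeRight)

theorem LinearMap.lTensor_mulRight {R A B : Type*} [CommSemiring R] [Semiring A] [Algebra R A]
    [Semiring B] [Algebra R B] (c : B) :
    (LinearMap.mulRight R c).lTensor A = LinearMap.mulRight R ((1 : A) ⊗ₜ[R] c) :=
  TensorProduct.ext' fun a b => by simp [Algebra.TensorProduct.tmul_mul_tmul]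

section Bialgebra

variable {R H : Type*} [CommSemiring R] [Semiring H] [Bialgebra R H]

theorem assoc_symm_lTensor_mulRight_comul (b x : H) :
    (TensorProduct.assoc R H H H).symm
        (LinearMap.lTensor H (LinearMap.mulRight R ((1 : H) ⊗ₜ[R] b) ∘ₗ Coalgebra.comul)
          (Coalgebra.comul x)) =
      LinearMap.rTensor H Coalgebra.comul (Coalgebra.comul (R := R) x * ((1 : H) ⊗ₜ[R] b)) := by
  have assoc_symm_mul : ∀ u v : H ⊗[R] (H ⊗[R] H), (TensorProduct.assoc R H H H).symm (u * v) =
      (TensorProduct.assoc R H H H).symm u * (TensorProduct.assoc R H H H).symm v :=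
    map_mul (Algebra.TensorProduct.assoc R R R H H H).symm
  have rTensor_comul_mul : ∀ u v : H ⊗[R] H, LinearMap.rTensor H Coalgebra.comul (u * v) =
      LinearMap.rTensor H Coalgebra.comul u * LinearMap.rTensor H (Coalgebra.comul (R := R)) v :=
    map_mul (Algebra.TensorProduct.rTensor H (Bialgebra.comulAlgHom R H))
  rw [LinearMap.lTensor_comp, LinearMap.comp_apply, LinearMap.lTensor_mulRight,
    LinearMap.mulRight_apply, assoc_symm_mul, Coalgebra.coassoc_symm_apply, rTensor_comul_mul]
  simp [Algebra.TensorProduct.one_def]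

variable {ι : Type*} [Fintype ι]

theorem comul_map_eq_mul {π : Matrix ι ι H}
    (hπ : ∀ a b, Coalgebra.comul (R := R) (π a b) = ∑ c, π a c ⊗ₜ[R] π c b) :
    π.map (Bialgebra.comulAlgHom R H) = π.map (includeLeft (S := R)) * π.map includeRight := by
  ext a b
  simp [Matrix.mul_apply, hπ, Algebra.TensorProduct.tmul_mul_tmul]

theorem comul_map_inv_eq_mul [DecidableEq ι] {π π' : Matrix ι ι H}
    (hπ : ∀ a b, Coalgebra.comul (R := R) (π a b) = ∑ c, π a c ⊗ₜ[R] π c b)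
    (hππ' : π * π' = 1) (hπ'π : π' * π = 1) :
    π'.map (Bialgebra.comulAlgHom R H) = π'.map includeRight * π'.map (includeLeft (S := R)) := by
  refine left_inv_eq_right_inv (a := π.map (Bialgebra.comulAlgHom R H)) ?_ ?_
  · rw [← AlgHom.mapMatrix_apply, ← AlgHom.mapMatrix_apply, ← map_mul, hπ'π, map_one]
  · simp only [comul_map_eq_mul hπ, ← AlgHom.mapMatrix_apply]
    rw [mul_assoc, ← mul_assoc (includeRight.mapMatrix π), ← map_mul, hππ', map_one, one_mul,
      ← map_mul, hππ', map_one]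

theorem sum_comul_inv_mul_tmul_one [DecidableEq ι] {π π' : Matrix ι ι H}
    (hπ : ∀ a b, Coalgebra.comul (R := R) (π a b) = ∑ c, π a c ⊗ₜ[R] π c b)
    (hππ' : π * π' = 1) (hπ'π : π' * π = 1) (k j : ι) :
    ∑ i, Coalgebra.comul (R := R) (π' k i) * (π i j ⊗ₜ[R] (1 : H)) = (1 : H) ⊗ₜ[R] π' k j := by
  have key : π'.map (Bialgebra.comulAlgHom R H) * π.map (includeLeft (S := R)) =
      π'.map includeRight := by
    rw [comul_map_inv_eq_mul hπ hππ' hπ'π]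
    simp only [← AlgHom.mapMatrix_apply]
    rw [mul_assoc, ← map_mul, hπ'π, map_one, mul_one]
  simpa [Matrix.mul_apply] using congrFun (congrFun key k) j

end Bialgebra

section OneForms

variable {R H : Type*} [CommRing R] [Ring H] [Bialgebra R H] {n : ℕ}
  {π π' : Matrix (Fin n) (Fin n) H}

theorem sum_Amap (hπ : ∀ a b, Coalgebra.comul (R := R) (π a b) = ∑ c, π a c ⊗ₜ[R] π c b)
    (hππ' : π * π' = 1) (hπ'π : π' * π = 1) (j k : Fin n) :
    ∑ i, Amap R H π π' j i k = LinearMap.mulRight R ((1 : H) ⊗ₜ[R] π' k j) ∘ₗ Coalgebra.comul := by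
  ext x
  simp only [LinearMap.sum_apply, Amap, LinearMap.comp_apply, LinearMap.mulRight_apply,
    Bialgebra.comul_mul, mul_assoc, ← Finset.mul_sum, sum_comul_inv_mul_tmul_one hπ hππ' hπ'π]

theorem deltaR_apply (hπ : ∀ a b, Coalgebra.comul (R := R) (π a b) = ∑ c, π a c ⊗ₜ[R] π c b)
    (hππ' : π * π' = 1) (hπ'π : π' * π = 1) (v : Fin n → H) (j : Fin n) :
    deltaR R H π π' v j = ∑ k, Coalgebra.comul (R := R) (v k) * ((1 : H) ⊗ₜ[R] π' k j) := by
  rw [deltaR, Finset.sum_comm]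
  simp only [← LinearMap.sum_apply, sum_Amap hπ hππ' hπ'π, LinearMap.comp_apply,
    LinearMap.mulRight_apply]

end OneForms

theorem bicovariance_general (R H : Type*) [CommRing R] [Ring H] [Bialgebra R H] {n : ℕ}
    (π π' : Matrix (Fin n) (Fin n) H)
    (hπ : ∀ a b, Coalgebra.comul (R := R) (π a b) = ∑ c, π a c ⊗ₜ[R] π c b)
    (hππ' : π * π' = 1) (hπ'π : π' * π = 1) :
    ∀ (v : Fin n → H) (j : Fin n),
      (TensorProduct.assoc R H H H).symm
          (∑ i, ∑ k, (LinearMap.lTensor H (Amap R H π π' j i k))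
            (Coalgebra.comul (R := R) (v k))) =
        (LinearMap.rTensor H (Coalgebra.comul (R := R) (A := H)))
          (deltaR R H π π' v j) := by
  intro v j
  rw [Finset.sum_comm, deltaR_apply hπ hππ' hπ'π, map_sum, map_sum]
  refine Finset.sum_congr rfl fun k _ => ?_
  rw [← LinearMap.sum_apply, ← LinearMap.coe_lTensorHom, ← map_sum, LinearMap.coe_lTensorHom,
    sum_Amap hπ hππ' hπ'π, assoc_symm_lTensor_mulRight_comul]

/-- bicovariance `(id ⊗ Δ_R) ∘ Δ_L = (Δ_L ⊗ id) ∘ Δ_R` of the one-forms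
`H^n`, where `(Δ_L v)_j = Δ(v_j)` and `Δ_R` is as in `deltaR` (componentwise in
`(H ⊗ H ⊗ H)^n`, with the left leg(s) re-associated). -/
theorem bicovariance (R H : Type*) [CommRing R] [Ring H] [Bialgebra R H] {n : ℕ}
    (π π' : Matrix (Fin n) (Fin n) H)
    (hπ : ∀ a b, Coalgebra.comul (R := R) (π a b) = ∑ c, π a c ⊗ₜ[R] π c b)
    (hε : ∀ a b, Coalgebra.counit (R := R) (π a b) = if a = b then (1 : R) else 0)
    (hππ' : π * π' = 1) (hπ'π : π' * π = 1) :
    ∀ (v : Fin n → H) (j : Fin n),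
      (TensorProduct.assoc R H H H).symm
          (∑ i, ∑ k, (LinearMap.lTensor H (Amap R H π π' j i k))
            (Coalgebra.comul (R := R) (v k))) =
        (LinearMap.rTensor H (Coalgebra.comul (R := R) (A := H)))
          (deltaR R H π π' v j) :=
  bicovariance_general R H π π' hπ hππ' hπ'π
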